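/- Removal of a vertex: let X^* be a filtered simplicial complex on a finite vertex set V with at least two vertices, v ∈ V, and (X − {v})^* the full subcomplex on V − {v}. Then X^* and (X − {v})^* are δ_X(v)-interleaved, where δ_X(v) = min_{w ≠ v} δ_X(v, w); hence d_I^F(X^*, (X − {v})^*) ≤ δ_X(v). -/

import Mathlib

open Finset Function

noncomputable section
open scoped Classical

variable {V W U : Type} [Fintype V] [Fintype W] [Fintype U]

/-- A size function is monotone on nonempty subsets. -/
def Monot (D : Finset V → ℝ) : Prop :=
  ∀ ⦃α β : Finset V⦄, α.Nonempty → α ⊆ β → D α ≤ D β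

/-- `max 0 (sup over nonempty subsets of the vertex set of g)`. -/
def supSub (g : Finset V → ℝ) : ℝ :=
  ((Finset.univ : Finset V).powerset.filter Finset.Nonempty).fold max 0 g

/-- Degree of a morphism: least `r ≥ 0` with `D_Y (f α) ≤ D_X α + r` for all nonempty `α`. -/
def degF (DX : Finset V → ℝ) (DY : Finset W → ℝ) (f : V → W) : ℝ :=
  supSub fun α => DY (α.image f) - DX α

/-- Codegree: least `r ≥ 0` with `D_Y (f α ∪ g α) ≤ D_X α + r` for all nonempty `α`. -/
def codegF (DX : Finset V → ℝ) (DY : Finset W → ℝ) (f g : V → W) : ℝ :=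
  supSub fun α => DY (α.image f ∪ α.image g) - DX α

/-- `codeg^∞`: minimum over chains `f = F 0, …, F n = g` of the max codegree of
consecutive terms. -/
def codegInfF (DX : Finset V → ℝ) (DY : Finset W → ℝ) (f g : V → W) : ℝ :=
  sInf { c : ℝ | ∃ n : ℕ, 0 < n ∧ ∃ F : ℕ → V → W, F 0 = f ∧ F n = g ∧
    c = (Finset.range n).fold max 0 fun i => codegF DX DY (F i) (F (i + 1)) }

/-- `(f, g)` is an `ε`-interleaving between the filtered complexes given by `DX`, `DY`. -/
def IsInterleaving (DX : Finset V → ℝ) (DY : Finset W → ℝ)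
    (f : V → W) (g : W → V) (ε : ℝ) : Prop :=
  degF DX DY f ≤ ε ∧ degF DY DX g ≤ ε ∧
  codegInfF DX DX (g ∘ f) id ≤ 2 * ε ∧ codegInfF DY DY (f ∘ g) id ≤ 2 * ε

/-- The interleaving distance between filtered simplicial complexes. -/
def dIF (DX : Finset V → ℝ) (DY : Finset W → ℝ) : ℝ :=
  sInf { ε : ℝ | 0 ≤ ε ∧ ∃ f g, IsInterleaving DX DY f g ε }

/-- The vertex quasi-distance `δ_X(v,w)`. -/
def vqd (D : Finset V → ℝ) (v w : V) : ℝ :=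
  supSub fun α => D (insert w α) - D (insert v α)

/-- Distortion of a correspondence `R ⊆ V × W`, viewed as a tripod via the projections. -/
def corDis (DX : Finset V → ℝ) (DY : Finset W → ℝ) (R : Finset (V × W)) : ℝ :=
  (R.powerset.filter Finset.Nonempty).fold max 0 fun α =>
    |DX (α.image Prod.fst) - DY (α.image Prod.snd)|

/-- Gromov–Hausdorff distance (via correspondences). -/
def dGHcor (DX : Finset V → ℝ) (DY : Finset W → ℝ) : ℝ :=
  (1 / 2) * sInf { c : ℝ | ∃ R : Finset (V × W),
    (∀ v : V, ∃ w, (v, w) ∈ R) ∧ (∀ w : W, ∃ v, (v, w) ∈ R) ∧ c = corDis DX DY R }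

/-- Distortion of a tripod `(Z, p, q)`. -/
def trdis (DX : Finset V → ℝ) (DY : Finset W → ℝ) {Z : Type} [Fintype Z]
    (p : Z → V) (q : Z → W) : ℝ :=
  supSub fun α : Finset Z => |DX (α.image p) - DY (α.image q)|

/-- Gromov–Hausdorff distance between filtered simplicial complexes (via tripods). -/
def dGHtri (DX : Finset V → ℝ) (DY : Finset W → ℝ) : ℝ :=
  (1 / 2) * sInf { c : ℝ | ∃ (Z : Type) (_i : Fintype Z) (p : Z → V) (q : Z → W),
    Surjective p ∧ Surjective q ∧ c = trdis DX DY p q }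

/-- Diameter of a finite subset of a metric space. -/
def fdiam {M : Type} [MetricSpace M] (σ : Finset M) : ℝ :=
  (σ ×ˢ σ).fold max 0 fun p => dist p.1 p.2

/-- Metric distortion of a correspondence between metric spaces. -/
def metDis {M N : Type} [MetricSpace M] [MetricSpace N] (R : Finset (M × N)) : ℝ :=
  (R ×ˢ R).fold max 0 fun p => |dist p.1.1 p.2.1 - dist p.1.2 p.2.2|

/-- Gromov–Hausdorff distance between finite metric spaces. -/
def dGHmet (M N : Type) [MetricSpace M] [MetricSpace N] : ℝ :=
  (1 / 2) * sInf { c : ℝ | ∃ R : Finset (M × N),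
    (∀ x : M, ∃ y, (x, y) ∈ R) ∧ (∀ y : N, ∃ x, (x, y) ∈ R) ∧ c = metDis R }

/-- Codensity of a vertex: `δ_X(v) = min_{w ≠ v} δ_X(v, w)`. -/
def vcod (D : Finset V → ℝ) (v : V) : ℝ :=
  sInf { d : ℝ | ∃ w, w ≠ v ∧ d = vqd D v w }

/-!
Retract `v` onto a vertex `w ≠ v` realizing `δ_X(v) = δ_X(v, w)`. A simplex `α ∋ v` is sent into
`α ∪ {w}`, and since `α = α ∪ {v}` its filtration value grows by at most `δ_X(v, w)`; simplices
avoiding `v` are fixed. So the retraction has degree, and codegree to the identity, at most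
`δ_X(v)`, while the inclusion of the full subcomplex has degree `0` and is a section of it.
-/

lemma supSub_nonneg (g : Finset V → ℝ) : 0 ≤ supSub g :=
  (Finset.le_fold_max 0).mpr (Or.inl le_rfl)

lemma le_supSub (g : Finset V → ℝ) {α : Finset V} (hα : α.Nonempty) : g α ≤ supSub g :=
  (Finset.le_fold_max (g α)).mpr (Or.inr ⟨α, by simp [hα], le_rfl⟩)

lemma supSub_le {g : Finset V → ℝ} {c : ℝ} (hc : 0 ≤ c)
    (h : ∀ α : Finset V, α.Nonempty → g α ≤ c) : supSub g ≤ c :=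
  (Finset.fold_max_le c).mpr ⟨hc, fun α hα => h α (Finset.mem_filter.mp hα).2⟩

lemma supSub_zero : supSub (fun _ : Finset V => (0 : ℝ)) = 0 :=
  le_antisymm (supSub_le le_rfl fun _ _ => le_rfl) (supSub_nonneg _)

lemma vqd_nonneg (D : Finset V → ℝ) (v w : V) : 0 ≤ vqd D v w :=
  supSub_nonneg _

section Interleaving

lemma codegInfF_le_max_codegF {X Y : Type} [Fintype X] (DX : Finset X → ℝ) (DY : Finset Y → ℝ)
    (f g : X → Y) : codegInfF DX DY f g ≤ max (codegF DX DY f g) 0 := by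
  apply csInf_le
  · refine ⟨0, ?_⟩
    rintro c ⟨n, -, F, -, -, rfl⟩
    exact (Finset.le_fold_max 0).mpr (Or.inl le_rfl)
  · exact ⟨1, one_pos, fun i => if i = 0 then f else g, by simp, by simp, by simp⟩

variable {DX : Finset V → ℝ} {DY : Finset W → ℝ}

lemma IsInterleaving.of_codegF {f : V → W} {g : W → V} {ε : ℝ} (hε : 0 ≤ ε)
    (hf : degF DX DY f ≤ ε) (hg : degF DY DX g ≤ ε)
    (hgf : codegF DX DX (g ∘ f) id ≤ 2 * ε) (hfg : codegF DY DY (f ∘ g) id ≤ 2 * ε) :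
    IsInterleaving DX DY f g ε :=
  ⟨hf, hg, (codegInfF_le_max_codegF _ _ _ _).trans (max_le hgf (by linarith)),
    (codegInfF_le_max_codegF _ _ _ _).trans (max_le hfg (by linarith))⟩

lemma dIF_le_of_isInterleaving {f : V → W} {g : W → V} {ε : ℝ} (hε : 0 ≤ ε)
    (h : IsInterleaving DX DY f g ε) : dIF DX DY ≤ ε :=
  csInf_le ⟨0, fun _ hc => hc.1⟩ ⟨hε, f, g, h⟩

lemma degF_le_codegF {X Y : Type} [Fintype X] {DX : Finset X → ℝ} {DY : Finset Y → ℝ}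
    (hDY : Monot DY) (f g : X → Y) : degF DX DY f ≤ codegF DX DY f g :=
  supSub_le (supSub_nonneg _) fun _ hα =>
    (sub_le_sub_right (hDY (hα.image f) subset_union_left) _).trans
      (le_supSub (fun α => DY (α.image f ∪ α.image g) - DX α) hα)

lemma codegF_id_id (D : Finset V → ℝ) : codegF D D id id = 0 := by
  simp only [codegF, image_id, union_self, sub_self, supSub_zero]

end Interleaving

section FullSubcomplex

variable {X : Type} {p : X → Prop}

lemma degF_val_eq_zero [Fintype (Subtype p)] (D : Finset X → ℝ) :
    degF (fun α : Finset (Subtype p) => D (α.image Subtype.val)) D Subtype.val = 0 := by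
  simp only [degF, sub_self, supSub_zero]

lemma degF_to_subtype {Y : Type} [Fintype Y] (DY : Finset Y → ℝ) (D : Finset X → ℝ)
    (f : Y → Subtype p) :
    degF DY (fun α : Finset (Subtype p) => D (α.image Subtype.val)) f =
      degF DY D (Subtype.val ∘ f) := by
  simp only [degF, image_image]

end FullSubcomplex

section RetractVertex

variable {X : Type} {v w : X}

def retractVertex (v w : X) (hw : w ≠ v) : X → { u : X // u ≠ v } :=
  fun u => if h : u = v then ⟨w, hw⟩ else ⟨u, h⟩

lemma val_comp_retractVertex (hw : w ≠ v) :
    Subtype.val ∘ retractVertex v w hw = fun u => if u = v then w else u := by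
  funext u
  by_cases h : u = v <;> simp [retractVertex, h]

lemma retractVertex_comp_val (hw : w ≠ v) : retractVertex v w hw ∘ Subtype.val = id := by
  funext u
  simp [retractVertex, u.2]

end RetractVertex

lemma codegF_update_le_vqd {D : Finset V → ℝ} (hD : Monot D) (v w : V) :
    codegF D D (fun u => if u = v then w else u) id ≤ vqd D v w := by
  refine supSub_le (supSub_nonneg _) fun α hα => ?_
  rw [image_id]
  by_cases hv : v ∈ α
  · have hsub : α.image (fun u => if u = v then w else u) ∪ α ⊆ insert w α := by
      intro x hx
      simp only [mem_union, mem_image] at hx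
      rcases hx with ⟨u, hu, rfl⟩ | hx
      · split_ifs <;> simp [hu]
      · exact mem_insert_of_mem hx
    calc D (α.image (fun u => if u = v then w else u) ∪ α) - D α
        ≤ D (insert w α) - D (insert v α) := by
          rw [insert_eq_of_mem hv]
          exact sub_le_sub_right (hD ((hα.image _).mono subset_union_left) hsub) _
      _ ≤ vqd D v w := le_supSub (fun α => D (insert w α) - D (insert v α)) hα
  · have hfix : α.image (fun u => if u = v then w else u) = α :=
      (image_congr fun u hu => if_neg (ne_of_mem_of_not_mem hu hv)).trans image_id
    rw [hfix, union_self, sub_self]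
    exact vqd_nonneg D v w

lemma isInterleaving_retractVertex {D : Finset V → ℝ} {v w : V} (hD : Monot D) (hw : w ≠ v) :
    IsInterleaving D (fun α : Finset { u : V // u ≠ v } => D (α.image Subtype.val))
      (retractVertex v w hw) Subtype.val (vqd D v w) := by
  have hcodeg := codegF_update_le_vqd hD v w
  have hδ := vqd_nonneg D v w
  refine IsInterleaving.of_codegF hδ ?_ ?_ ?_ ?_
  · rw [degF_to_subtype, val_comp_retractVertex]
    exact (degF_le_codegF hD _ id).trans hcodeg
  · rw [degF_val_eq_zero]
    exact hδ
  · rw [val_comp_retractVertex]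
    linarith
  · rw [retractVertex_comp_val, codegF_id_id]
    linarith

lemma exists_vcod_eq_vqd (D : Finset V → ℝ) (v : V) (hcard : 1 < Fintype.card V) :
    ∃ w, w ≠ v ∧ vcod D v = vqd D v w := by
  obtain ⟨w₀, hw₀⟩ := Fintype.exists_ne_of_one_lt_card hcard v
  have hfin : { d : ℝ | ∃ w, w ≠ v ∧ d = vqd D v w }.Finite :=
    (Set.finite_range (vqd D v)).subset fun _ ⟨w, _, hd⟩ => ⟨w, hd.symm⟩
  exact Set.Nonempty.csInf_mem (s := { d : ℝ | ∃ w, w ≠ v ∧ d = vqd D v w })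
    ⟨_, w₀, hw₀, rfl⟩ hfin

/-- removal of a vertex: `X^*` and the full subcomplex `(X - {v})^*` are
`δ_X(v)`-interleaved, hence `d_I^F(X^*, (X - {v})^*) ≤ δ_X(v)`. -/
theorem stmt_15 (D : Finset V → ℝ) (hD : Monot D) (v : V) (hcard : 1 < Fintype.card V) :
    (∃ (f : V → { w : V // w ≠ v }) (g : { w : V // w ≠ v } → V),
      IsInterleaving D (fun α : Finset { w : V // w ≠ v } => D (α.image Subtype.val))
        f g (vcod D v)) ∧
    dIF D (fun α : Finset { w : V // w ≠ v } => D (α.image Subtype.val)) ≤ vcod D v := by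
  obtain ⟨w, hwv, hδ⟩ := exists_vcod_eq_vqd D v hcard
  have hint := isInterleaving_retractVertex hD hwv
  rw [← hδ] at hint
  exact ⟨⟨_, _, hint⟩, dIF_le_of_isInterleaving (hδ ▸ vqd_nonneg D v w) hint⟩
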